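/- Let (M,g) be a riemannian spin manifold with spinor bundle S(M) whose inner product (-,-) satisfies (v·ε₁,ε₂) = -(ε₁,v·ε₂). If ε₁, ε₂ are Killing spinors with the same Killing constant λ (i.e. ∇_X εᵢ = λ X·εᵢ for all vector fields X), then the vector field V defined by g(V,X) = (ε₁, X·ε₂) is a Killing vector field. -/

import Mathlib

/-!
Differentiating `g(V, Y) = (ε₁, Y·ε₂)` along `X` and using the Killing equations gives
`g(∇_X V, Y) = λ (X·ε₁, Y·ε₂) + λ (ε₁, Y·X·ε₂) = λ (ε₁, (Y·X - X·Y)·ε₂)`,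
the last step by skewness of Clifford multiplication. The right-hand side is antisymmetric
in `X, Y`, which is the Killing equation for `V`.
-/

section SpinorSquare

variable {C VF SP : Type*} [CommRing C] [AddCommGroup VF] [Module C VF]
  [AddCommGroup SP] [Module C SP]

theorem metric_conn_dual_vector_eq (g : VF →ₗ[C] VF →ₗ[C] C) (D : VF → C → C)
    (conn : VF → VF → VF) (connS : VF → SP → SP) (cl : VF →ₗ[C] SP →ₗ[C] SP)
    (B : SP →ₗ[C] SP →ₗ[C] C)
    (hmetric : ∀ X Y Z, D X (g Y Z) = g (conn X Y) Z + g Y (conn X Z))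
    (hBcompat : ∀ X s t, D X (B s t) = B (connS X s) t + B s (connS X t))
    (hLeibniz : ∀ X Y s, connS X (cl Y s) = cl (conn X Y) s + cl Y (connS X s))
    {ε₁ ε₂ : SP} {V : VF} (hV : ∀ X, g V X = B ε₁ (cl X ε₂)) (X Y : VF) :
    g (conn X V) Y = B (connS X ε₁) (cl Y ε₂) + B ε₁ (cl Y (connS X ε₂)) := by
  have hD : D X (g V Y) = D X (B ε₁ (cl Y ε₂)) := by rw [hV]
  rw [hmetric, hBcompat, hLeibniz, hV, map_add] at hD
  linear_combination hD

theorem metric_conn_dual_vector_eq_of_killing (g : VF →ₗ[C] VF →ₗ[C] C) (D : VF → C → C)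
    (conn : VF → VF → VF) (connS : VF → SP → SP) (cl : VF →ₗ[C] SP →ₗ[C] SP)
    (B : SP →ₗ[C] SP →ₗ[C] C)
    (hmetric : ∀ X Y Z, D X (g Y Z) = g (conn X Y) Z + g Y (conn X Z))
    (hBcompat : ∀ X s t, D X (B s t) = B (connS X s) t + B s (connS X t))
    (hLeibniz : ∀ X Y s, connS X (cl Y s) = cl (conn X Y) s + cl Y (connS X s))
    (hClskew : ∀ X s t, B (cl X s) t = - B s (cl X t))
    {lam : C} {ε₁ ε₂ : SP}
    (hK₁ : ∀ X, connS X ε₁ = lam • cl X ε₁) (hK₂ : ∀ X, connS X ε₂ = lam • cl X ε₂)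
    {V : VF} (hV : ∀ X, g V X = B ε₁ (cl X ε₂)) (X Y : VF) :
    g (conn X V) Y = lam * B ε₁ (cl Y (cl X ε₂) - cl X (cl Y ε₂)) := by
  rw [metric_conn_dual_vector_eq g D conn connS cl B hmetric hBcompat hLeibniz hV, hK₁, hK₂,
    map_smul, map_smul, map_smul, LinearMap.smul_apply, hClskew, map_sub, smul_eq_mul,
    smul_eq_mul]
  ring

end SpinorSquare

theorem squaring_killing_spinors_gives_killing_vector_general
    (C VF SP : Type) [CommRing C] [AddCommGroup VF] [Module C VF]
    [AddCommGroup SP] [Module C SP]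
    (g : VF →ₗ[C] VF →ₗ[C] C)
    (D : VF → C → C)                 -- directional derivative of functions
    (conn : VF → VF → VF)            -- Levi-Civita connection on vector fields
    (connS : VF → SP → SP)           -- spin connection on spinors
    (cl : VF →ₗ[C] SP →ₗ[C] SP)      -- Clifford action
    (B : SP →ₗ[C] SP →ₗ[C] C)        -- spinor inner product
    (hmetric : ∀ X Y Z, D X (g Y Z) = g (conn X Y) Z + g Y (conn X Z))
    (hBcompat : ∀ X s t, D X (B s t) = B (connS X s) t + B s (connS X t))
    (hLeibniz : ∀ X Y s, connS X (cl Y s) = cl (conn X Y) s + cl Y (connS X s))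
    (hClskew : ∀ X s t, B (cl X s) t = - B s (cl X t))
    (lam : C) (ε₁ ε₂ : SP)
    (hK₁ : ∀ X, connS X ε₁ = lam • cl X ε₁)
    (hK₂ : ∀ X, connS X ε₂ = lam • cl X ε₂)
    (V : VF) (hV : ∀ X, g V X = B ε₁ (cl X ε₂)) :
    ∀ X Y, g (conn X V) Y + g (conn Y V) X = 0 := by
  intro X Y
  have hconn := metric_conn_dual_vector_eq_of_killing g D conn connS cl B hmetric hBcompat
    hLeibniz hClskew hK₁ hK₂ hV
  rw [hconn X Y, hconn Y X, map_sub, map_sub]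
  ring

/-- On a riemannian spin manifold (axiomatised here by a commutative ring `C` of functions, a
`C`-module `VF` of vector fields with metric `g` and Levi-Civita connection `∇`, a `C`-module
`SP` of spinor fields with spin connection `∇S`, Clifford action `cl` and spinor inner product
`B` satisfying `(v·ε₁,ε₂) = -(ε₁,v·ε₂)`): if `ε₁, ε₂` are Killing spinors with the same Killing
constant `lam`, then the vector field `V` defined by `g(V,X) = (ε₁, X·ε₂)` is a Killing vector
field. -/
theorem squaring_killing_spinors_gives_killing_vector
    (C VF SP : Type) [CommRing C] [AddCommGroup VF] [Module C VF]
    [AddCommGroup SP] [Module C SP]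
    (g : VF →ₗ[C] VF →ₗ[C] C) (hgsymm : ∀ X Y, g X Y = g Y X)
    (D : VF → C → C)                 -- directional derivative of functions
    (conn : VF → VF → VF)            -- Levi-Civita connection on vector fields
    (connS : VF → SP → SP)           -- spin connection on spinors
    (cl : VF →ₗ[C] SP →ₗ[C] SP)      -- Clifford action
    (B : SP →ₗ[C] SP →ₗ[C] C)        -- spinor inner product
    (hmetric : ∀ X Y Z, D X (g Y Z) = g (conn X Y) Z + g Y (conn X Z))
    (hBcompat : ∀ X s t, D X (B s t) = B (connS X s) t + B s (connS X t))
    (hLeibniz : ∀ X Y s, connS X (cl Y s) = cl (conn X Y) s + cl Y (connS X s))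
    (hClskew : ∀ X s t, B (cl X s) t = - B s (cl X t))
    (lam : C) (ε₁ ε₂ : SP)
    (hK₁ : ∀ X, connS X ε₁ = lam • cl X ε₁)
    (hK₂ : ∀ X, connS X ε₂ = lam • cl X ε₂)
    (V : VF) (hV : ∀ X, g V X = B ε₁ (cl X ε₂)) :
    ∀ X Y, g (conn X V) Y + g (conn Y V) X = 0 :=
  squaring_killing_spinors_gives_killing_vector_general C VF SP g D conn connS cl B hmetric hBcompat
    hLeibniz hClskew lam ε₁ ε₂ hK₁ hK₂ V hV
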